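/- If Φ : Ω → A₃ on a domain Ω ⊆ E₃ admits the representation Φ(ζ) = (1/(2πi))∮_γ (F₀(ξ) + F₁(ξ)ρ + F₂(ξ)ρ²)(ξ − ζ)⁻¹ dξ with F₀, F₁, F₂ holomorphic on D = f(Ω), then Φ extends to a function on the cylinder Π = {ζ ∈ E₃ : f(ζ) ∈ D} that is Lorch differentiable on Π, with Lorch derivative given by the same integral representation with F₀, F₁, F₂ replaced by F₀′, F₁′, F₂′. -/

import Mathlib

noncomputable section

/-- The commutative algebra `A₃ = ℂ[ρ]/(ρ³)`, with basis `{1, ρ, ρ²}`;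
an element `⟨a, b, c⟩` represents `a + b·ρ + c·ρ²`. -/
@[ext] structure A3 : Type where
  a : ℂ
  b : ℂ
  c : ℂ

namespace A3

instance : Zero A3 := ⟨⟨0, 0, 0⟩⟩
instance : One A3 := ⟨⟨1, 0, 0⟩⟩
instance : Add A3 := ⟨fun x y => ⟨x.a + y.a, x.b + y.b, x.c + y.c⟩⟩
instance : Neg A3 := ⟨fun x => ⟨-x.a, -x.b, -x.c⟩⟩
instance : Mul A3 :=
  ⟨fun x y => ⟨x.a * y.a, x.a * y.b + x.b * y.a, x.a * y.c + x.b * y.b + x.c * y.a⟩⟩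

@[simp] lemma zero_a : (0 : A3).a = 0 := rfl
@[simp] lemma zero_b : (0 : A3).b = 0 := rfl
@[simp] lemma zero_c : (0 : A3).c = 0 := rfl
@[simp] lemma one_a : (1 : A3).a = 1 := rfl
@[simp] lemma one_b : (1 : A3).b = 0 := rfl
@[simp] lemma one_c : (1 : A3).c = 0 := rfl
@[simp] lemma add_a (x y : A3) : (x + y).a = x.a + y.a := rfl
@[simp] lemma add_b (x y : A3) : (x + y).b = x.b + y.b := rfl
@[simp] lemma add_c (x y : A3) : (x + y).c = x.c + y.c := rfl
@[simp] lemma neg_a (x : A3) : (-x).a = -x.a := rfl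
@[simp] lemma neg_b (x : A3) : (-x).b = -x.b := rfl
@[simp] lemma neg_c (x : A3) : (-x).c = -x.c := rfl
@[simp] lemma mul_a (x y : A3) : (x * y).a = x.a * y.a := rfl
@[simp] lemma mul_b (x y : A3) : (x * y).b = x.a * y.b + x.b * y.a := rfl
@[simp] lemma mul_c (x y : A3) : (x * y).c = x.a * y.c + x.b * y.b + x.c * y.a := rfl

instance : CommRing A3 where
  add_assoc x y z := by ext <;> simp <;> ring
  zero_add x := by ext <;> simp
  add_zero x := by ext <;> simp
  add_comm x y := by ext <;> simp <;> ring
  neg_add_cancel x := by ext <;> simp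
  left_distrib x y z := by ext <;> simp <;> ring
  right_distrib x y z := by ext <;> simp <;> ring
  zero_mul x := by ext <;> simp
  mul_zero x := by ext <;> simp
  mul_assoc x y z := by ext <;> simp <;> ring
  one_mul x := by ext <;> simp
  mul_one x := by ext <;> simp
  mul_comm x y := by ext <;> simp <;> ring
  nsmul := fun n x => ⟨n • x.a, n • x.b, n • x.c⟩
  nsmul_zero x := by ext <;> exact zero_nsmul _
  nsmul_succ n x := by ext <;> exact succ_nsmul _ n
  zsmul := fun n x => ⟨n • x.a, n • x.b, n • x.c⟩
  zsmul_zero' x := by ext <;> exact zero_zsmul _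
  zsmul_succ' n x := by ext <;> exact SubNegMonoid.zsmul_succ' n _
  zsmul_neg' n x := by ext <;> exact SubNegMonoid.zsmul_neg' n _

/-- The canonical embedding `ℂ → A₃`. -/
def toA3 : ℂ →+* A3 where
  toFun r := ⟨r, 0, 0⟩
  map_one' := rfl
  map_mul' x y := by ext <;> simp
  map_zero' := rfl
  map_add' x y := by ext <;> simp

instance : Algebra ℂ A3 := toA3.toAlgebra
instance : Algebra ℝ A3 := (toA3.comp (algebraMap ℝ ℂ)).toAlgebra

@[simp] lemma smulC_a (r : ℂ) (x : A3) : (r • x).a = r * x.a := by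
  show (toA3 r * x).a = _ ; simp [toA3]
@[simp] lemma smulC_b (r : ℂ) (x : A3) : (r • x).b = r * x.b := by
  show (toA3 r * x).b = _ ; simp [toA3]
@[simp] lemma smulC_c (r : ℂ) (x : A3) : (r • x).c = r * x.c := by
  show (toA3 r * x).c = _ ; simp [toA3]
@[simp] lemma smulR_a (r : ℝ) (x : A3) : (r • x).a = (r : ℂ) * x.a := by
  show ((toA3.comp (algebraMap ℝ ℂ)) r * x).a = _ ; simp [toA3]
@[simp] lemma smulR_b (r : ℝ) (x : A3) : (r • x).b = (r : ℂ) * x.b := by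
  show ((toA3.comp (algebraMap ℝ ℂ)) r * x).b = _ ; simp [toA3]
@[simp] lemma smulR_c (r : ℝ) (x : A3) : (r • x).c = (r : ℂ) * x.c := by
  show ((toA3.comp (algebraMap ℝ ℂ)) r * x).c = _ ; simp [toA3]

/-- The nilpotent generator `ρ`. -/
def ρ : A3 := ⟨0, 1, 0⟩

lemma rho_sq : ρ ^ 2 = ⟨0, 0, 1⟩ := by ext <;> simp [ρ, sq]
lemma rho_cubed : ρ ^ 3 = 0 := by ext <;> simp [ρ, pow_succ, sq]

/-- The element `a + b·ρ + c·ρ²` of `A₃`. -/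
def el (a b c : ℂ) : A3 := algebraMap ℂ A3 a + b • ρ + c • ρ ^ 2

lemma el_def (a b c : ℂ) : el a b c = ⟨a, b, c⟩ := by
  simp only [el, rho_sq]; ext <;> simp [ρ] <;> simp [Algebra.algebraMap_eq_smul_one, toA3]

/-- The Euclidean norm `‖a + bρ + cρ²‖ = √(|a|² + |b|² + |c|²)`. -/
def nrm (x : A3) : ℝ :=
  Real.sqrt (‖x.a‖ ^ 2 + ‖x.b‖ ^ 2 + ‖x.c‖ ^ 2)

/-- The topology of `A₃` (that of the Euclidean norm, i.e. of `ℂ³`). -/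
instance : TopologicalSpace A3 :=
  TopologicalSpace.induced (fun x => (x.a, x.b, x.c)) inferInstance

/-- The functional `f(a + bρ + cρ²) = a`. -/
def fl (x : A3) : ℂ := x.a

/-- The set `I = {λ₁ρ + λ₂ρ² : λ₁, λ₂ ∈ ℂ}`. -/
def Iset : Set A3 := {x | ∃ l₁ l₂ : ℂ, x = l₁ • ρ + l₂ • ρ ^ 2}

/-- The kernel of `f`, i.e. the ideal `I`, as a real subspace of `A₃`. -/
def Iker : Submodule ℝ A3 where
  carrier := {x | x.a = 0}
  add_mem' := by intro x y hx hy; simp_all [Set.mem_setOf_eq]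
  zero_mem' := rfl
  smul_mem' := by intro r x hx; simp_all [Set.mem_setOf_eq]

/-- Componentwise contour integral over the circle `C(center, r)` of an `A₃`-valued function. -/
def cInt (g : ℂ → A3) (center : ℂ) (r : ℝ) : A3 :=
  ⟨∮ z in C(center, r), (g z).a, ∮ z in C(center, r), (g z).b, ∮ z in C(center, r), (g z).c⟩

end A3

/-! Expanding `(ξ - ζ)⁻¹ = Σ_{k<3} (ζ - a)ᵏ / (ξ - a)ᵏ⁺¹` with `a = f(ζ)` (the part `ζ - a` is
nilpotent of order 3) and applying Cauchy's formula for derivatives coordinatewise, the integral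
equals `F₀(ζ) + F₁(ζ)ρ + F₂(ζ)ρ²`, where `F(a + n) := F(a) + F'(a) n + F''(a) n² / 2`. This
expression is defined on the whole cylinder `f(ζ) ∈ D`; its coordinates are holomorphic in
`(a, b, c)`, and their Fréchet derivative is multiplication by the same expression built from
`F₀', F₁', F₂'`, which is Lorch differentiability. -/

open Complex Real Metric

section CauchyFormula

variable {G : ℂ → ℂ} {a : ℂ} {r : ℝ}

lemma circleIntegrable_div_sub_pow (hr : 0 < r) (hG : ContinuousOn G (sphere a r)) (n : ℕ) :
    CircleIntegrable (fun z => G z / (z - a) ^ n) a r := by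
  refine ContinuousOn.circleIntegrable hr.le (hG.div (by fun_prop) fun z hz => ?_)
  exact pow_ne_zero _ (sub_ne_zero.2 (ne_of_mem_sphere hz hr.ne'))

lemma circleIntegral_div_sub_pow_succ (hr : 0 < r) (hG : DifferentiableOn ℂ G (closedBall a r))
    (n : ℕ) :
    ∮ z in C(a, r), G z / (z - a) ^ (n + 1) = 2 * π * I * (iteratedDeriv n G a / n.factorial) := by
  have := hG.circleIntegral_one_div_sub_center_pow_smul hr n
  simp only [smul_eq_mul, one_div, inv_mul_eq_div] at this
  rw [this]; ring

end CauchyFormula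

namespace A3

@[simp] lemma sub_a (x y : A3) : (x - y).a = x.a - y.a := rfl
@[simp] lemma sub_b (x y : A3) : (x - y).b = x.b - y.b := rfl
@[simp] lemma sub_c (x y : A3) : (x - y).c = x.c - y.c := rfl
@[simp] lemma toA3_a (z : ℂ) : (toA3 z).a = z := rfl
@[simp] lemma toA3_b (z : ℂ) : (toA3 z).b = 0 := rfl
@[simp] lemma toA3_c (z : ℂ) : (toA3 z).c = 0 := rfl

lemma inverse_eq_of_a_ne_zero {x : A3} (hx : x.a ≠ 0) :
    Ring.inverse x = ⟨x.a⁻¹, -x.b / x.a ^ 2, x.b ^ 2 / x.a ^ 3 - x.c / x.a ^ 2⟩ :=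
  Ring.inverse_unit (Units.mkOfMulEqOne x _ (by ext <;> simp <;> field_simp <;> ring))

lemma el_mul_inverse_toA3_sub {ξ : ℂ} {ζ : A3} (hξ : ξ ≠ ζ.a) (g₀ g₁ g₂ : ℂ) :
    el g₀ g₁ g₂ * Ring.inverse (toA3 ξ - ζ) =
      ⟨g₀ / (ξ - ζ.a), ζ.b * (g₀ / (ξ - ζ.a) ^ 2) + g₁ / (ξ - ζ.a),
        ζ.b ^ 2 * (g₀ / (ξ - ζ.a) ^ 3) + ζ.c * (g₀ / (ξ - ζ.a) ^ 2) +
          ζ.b * (g₁ / (ξ - ζ.a) ^ 2) + g₂ / (ξ - ζ.a)⟩ := by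
  have hne : ξ - ζ.a ≠ 0 := sub_ne_zero.2 hξ
  rw [el_def, inverse_eq_of_a_ne_zero (by simpa using hne)]
  ext <;> simp only [sub_a, sub_b, sub_c, toA3_a, toA3_b, toA3_c, mul_a, mul_b, mul_c, zero_sub,
    neg_neg, even_two, Even.neg_pow] <;> field_simp
  ring

/-- `F (a + n) = F a + F' a n + F'' a n² / 2` for `n = bρ + cρ²`, since `n³ = 0`. -/
def lift (F : ℂ → ℂ) (ζ : A3) : A3 :=
  ⟨F ζ.a, ζ.b * deriv F ζ.a, ζ.b ^ 2 * deriv (deriv F) ζ.a / 2 + ζ.c * deriv F ζ.a⟩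

def cauchyExt (F₀ F₁ F₂ : ℂ → ℂ) (ζ : A3) : A3 :=
  lift F₀ ζ + lift F₁ ζ * ρ + lift F₂ ζ * ρ ^ 2

@[simp] lemma cauchyExt_a (F₀ F₁ F₂ : ℂ → ℂ) (ζ : A3) :
    (cauchyExt F₀ F₁ F₂ ζ).a = F₀ ζ.a := by
  rw [cauchyExt, rho_sq]; simp [lift, ρ]

@[simp] lemma cauchyExt_b (F₀ F₁ F₂ : ℂ → ℂ) (ζ : A3) :
    (cauchyExt F₀ F₁ F₂ ζ).b = ζ.b * deriv F₀ ζ.a + F₁ ζ.a := by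
  rw [cauchyExt, rho_sq]; simp [lift, ρ]

@[simp] lemma cauchyExt_c (F₀ F₁ F₂ : ℂ → ℂ) (ζ : A3) :
    (cauchyExt F₀ F₁ F₂ ζ).c = ζ.b ^ 2 * deriv (deriv F₀) ζ.a / 2 + ζ.c * deriv F₀ ζ.a +
      ζ.b * deriv F₁ ζ.a + F₂ ζ.a := by
  rw [cauchyExt, rho_sq]; simp [lift, ρ]

theorem cauchyIntegral_eq_cauchyExt {G₀ G₁ G₂ : ℂ → ℂ} (ζ : A3) {r : ℝ} (hr : 0 < r)
    (h₀ : DifferentiableOn ℂ G₀ (closedBall ζ.a r)) (h₁ : DifferentiableOn ℂ G₁ (closedBall ζ.a r))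
    (h₂ : DifferentiableOn ℂ G₂ (closedBall ζ.a r)) :
    (2 * π * I : ℂ)⁻¹ •
      cInt (fun ξ => el (G₀ ξ) (G₁ ξ) (G₂ ξ) * Ring.inverse (toA3 ξ - ζ)) ζ.a r =
    cauchyExt G₀ G₁ G₂ ζ := by
  have hint {G : ℂ → ℂ} (hG : DifferentiableOn ℂ G (closedBall ζ.a r)) (k : ℂ) (n : ℕ) :
      CircleIntegrable (fun z => k * (G z / (z - ζ.a) ^ n)) ζ.a r :=
    (circleIntegrable_div_sub_pow hr (hG.continuousOn.mono sphere_subset_closedBall) n).const_smul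
  have hadd {f g : ℂ → ℂ} (hf : CircleIntegrable f ζ.a r) (hg : CircleIntegrable g ζ.a r) :
      CircleIntegrable (fun z => f z + g z) ζ.a r :=
    hf.add hg
  have hmom {G : ℂ → ℂ} (hG : DifferentiableOn ℂ G (closedBall ζ.a r)) (k : ℂ) (n : ℕ) :
      ∮ z in C(ζ.a, r), k * (G z / (z - ζ.a) ^ (n + 1)) =
        2 * π * I * (k * (iteratedDeriv n G ζ.a / n.factorial)) := by
    rw [circleIntegral.integral_const_mul, circleIntegral_div_sub_pow_succ hr hG]; ring
  have hrepr (z : ℂ) (hz : z ∈ sphere ζ.a r) := el_mul_inverse_toA3_sub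
    (ne_of_mem_sphere hz hr.ne') (G₀ z) (G₁ z) (G₂ z)
  rw [inv_smul_eq_iff₀ two_pi_I_ne_zero]
  ext <;> simp only [cInt, smulC_a, smulC_b, smulC_c, cauchyExt_a, cauchyExt_b, cauchyExt_c]
  · rw [circleIntegral.integral_congr (g := fun z => 1 * (G₀ z / (z - ζ.a) ^ (0 + 1))) hr.le
      fun z hz => by simp [hrepr z hz], hmom h₀]
    simp
  · rw [circleIntegral.integral_congr (g := fun z => ζ.b * (G₀ z / (z - ζ.a) ^ (1 + 1)) +
        1 * (G₁ z / (z - ζ.a) ^ (0 + 1))) hr.le fun z hz => by simp [hrepr z hz],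
      circleIntegral.integral_add (hint h₀ _ _) (hint h₁ _ _), hmom h₀, hmom h₁]
    simp only [iteratedDeriv_succ, iteratedDeriv_zero, Nat.factorial_one, Nat.cast_one, div_one,
      Nat.factorial_zero, one_mul]
    ring
  · rw [circleIntegral.integral_congr (g := fun z => ζ.b ^ 2 * (G₀ z / (z - ζ.a) ^ (2 + 1)) +
        ζ.c * (G₀ z / (z - ζ.a) ^ (1 + 1)) + ζ.b * (G₁ z / (z - ζ.a) ^ (1 + 1)) +
        1 * (G₂ z / (z - ζ.a) ^ (0 + 1))) hr.le fun z hz => by simp [hrepr z hz],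
      circleIntegral.integral_add (hadd (hadd (hint h₀ _ _) (hint h₀ _ _)) (hint h₁ _ _))
        (hint h₂ _ _),
      circleIntegral.integral_add (hadd (hint h₀ _ _) (hint h₀ _ _)) (hint h₁ _ _),
      circleIntegral.integral_add (hint h₀ _ _) (hint h₀ _ _), hmom h₀, hmom h₀, hmom h₁, hmom h₂]
    simp only [iteratedDeriv_succ, iteratedDeriv_zero, Nat.factorial_two, Nat.cast_ofNat,
      Nat.factorial_one, Nat.cast_one, div_one, Nat.factorial_zero, one_mul]
    ring

def toProd (x : A3) : ℂ × ℂ × ℂ := (x.a, x.b, x.c)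

def ofProd (v : ℂ × ℂ × ℂ) : A3 := ⟨v.1, v.2.1, v.2.2⟩

@[simp] lemma ofProd_toProd (x : A3) : ofProd (toProd x) = x := rfl
@[simp] lemma ofProd_zero : ofProd 0 = 0 := rfl
@[simp] lemma toProd_sub (x y : A3) : toProd (x - y) = toProd x - toProd y := rfl

def HasLorchDerivAt (Ψ : A3 → A3) (Ψ' ζ : A3) : Prop :=
  ∀ ε > 0, ∃ δ > 0, ∀ h : A3, nrm h < δ → nrm (Ψ (ζ + h) - Ψ ζ - h * Ψ') ≤ ε * nrm h

lemma norm_toProd_le_nrm (x : A3) : ‖toProd x‖ ≤ nrm x := by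
  simp only [toProd, Prod.norm_def, nrm]
  refine max_le (Real.le_sqrt_of_sq_le ?_) (max_le (Real.le_sqrt_of_sq_le ?_)
    (Real.le_sqrt_of_sq_le ?_)) <;> nlinarith [sq_nonneg ‖x.a‖, sq_nonneg ‖x.b‖, sq_nonneg ‖x.c‖]

lemma nrm_le_three_mul_norm_toProd (x : A3) : nrm x ≤ 3 * ‖toProd x‖ := by
  simp only [toProd, Prod.norm_def, nrm]
  rw [Real.sqrt_le_left (by positivity)]
  have ha := le_max_left ‖x.a‖ (max ‖x.b‖ ‖x.c‖)
  have hb := (le_max_left ‖x.b‖ ‖x.c‖).trans (le_max_right ‖x.a‖ _)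
  have hc := (le_max_right ‖x.b‖ ‖x.c‖).trans (le_max_right ‖x.a‖ _)
  have := norm_nonneg x.a
  have := norm_nonneg x.b
  have := norm_nonneg x.c
  nlinarith

theorem hasLorchDerivAt_of_hasFDerivAt {Ψ : A3 → A3} {Ψ' ζ : A3}
    {L : ℂ × ℂ × ℂ →L[ℂ] ℂ × ℂ × ℂ} (hΨ : HasFDerivAt (fun v => toProd (Ψ (ζ + ofProd v))) L 0)
    (hL : ∀ v, L v = toProd (ofProd v * Ψ')) : HasLorchDerivAt Ψ Ψ' ζ := by
  intro ε hε
  obtain ⟨δ, hδ, H⟩ :=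
    Metric.eventually_nhds_iff.1 (hΨ.isLittleO.def (show 0 < ε / 3 by positivity))
  refine ⟨δ, hδ, fun h hh => ?_⟩
  have hlin := H (show dist (toProd h) 0 < δ by
    simpa using (norm_toProd_le_nrm h).trans_lt hh)
  have hdiff : toProd (Ψ (ζ + ofProd (toProd h))) - toProd (Ψ (ζ + ofProd 0)) - L (toProd h - 0) =
      toProd (Ψ (ζ + h) - Ψ ζ - h * Ψ') := by
    simp only [ofProd_toProd, ofProd_zero, add_zero, sub_zero, hL, toProd_sub]
  rw [hdiff, sub_zero] at hlin
  calc nrm (Ψ (ζ + h) - Ψ ζ - h * Ψ') ≤ 3 * ‖toProd (Ψ (ζ + h) - Ψ ζ - h * Ψ')‖ :=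
        nrm_le_three_mul_norm_toProd _
    _ ≤ 3 * (ε / 3 * ‖toProd h‖) := by gcongr
    _ ≤ ε * nrm h := by
        have := norm_toProd_le_nrm h
        nlinarith

open ContinuousLinearMap in
theorem hasLorchDerivAt_cauchyExt {F₀ F₁ F₂ : ℂ → ℂ} {ζ : A3} (h₀ : AnalyticAt ℂ F₀ ζ.a)
    (h₁ : AnalyticAt ℂ F₁ ζ.a) (h₂ : AnalyticAt ℂ F₂ ζ.a) :
    HasLorchDerivAt (cauchyExt F₀ F₁ F₂) (cauchyExt (deriv F₀) (deriv F₁) (deriv F₂) ζ) ζ := by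
  have hF {G : ℂ → ℂ} (hG : AnalyticAt ℂ G ζ.a) :
      HasFDerivAt (fun v : ℂ × ℂ × ℂ => G (ζ.a + v.1)) (deriv G ζ.a • fst ℂ ℂ (ℂ × ℂ)) 0 :=
    hG.differentiableAt.hasDerivAt.comp_hasFDerivAt_of_eq 0
      ((fst ℂ ℂ (ℂ × ℂ)).hasFDerivAt.const_add ζ.a) (by simp)
  have hb : HasFDerivAt (fun v : ℂ × ℂ × ℂ => ζ.b + v.2.1) ((fst ℂ ℂ ℂ).comp (snd ℂ ℂ (ℂ × ℂ))) 0 :=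
    ((fst ℂ ℂ ℂ).comp (snd ℂ ℂ (ℂ × ℂ))).hasFDerivAt.const_add ζ.b
  have hc : HasFDerivAt (fun v : ℂ × ℂ × ℂ => ζ.c + v.2.2) ((snd ℂ ℂ ℂ).comp (snd ℂ ℂ (ℂ × ℂ))) 0 :=
    ((snd ℂ ℂ ℂ).comp (snd ℂ ℂ (ℂ × ℂ))).hasFDerivAt.const_add ζ.c
  have hcoords := (hF h₀).prodMk (((hb.mul (hF h₀.deriv)).add (hF h₁)).prodMk
    (((((hb.mul hb).mul (hF h₀.deriv.deriv)).mul_const 2⁻¹).add (hc.mul (hF h₀.deriv))).add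
      (hb.mul (hF h₁.deriv)) |>.add (hF h₂)))
  refine hasLorchDerivAt_of_hasFDerivAt
    (hcoords.congr_of_eventuallyEq (Filter.Eventually.of_forall fun v => ?_)) fun v => ?_
  · ext <;> simp only [toProd, ofProd, cauchyExt_a, cauchyExt_b, cauchyExt_c, add_a, add_b, add_c,
      Pi.add_apply, Pi.mul_apply]
    ring
  · ext <;> simp only [Prod.snd_zero, Prod.fst_zero, add_zero, Pi.mul_apply, smul_add,
      ContinuousLinearMap.prod_apply, smul_apply, coe_fst', smul_eq_mul, add_apply, comp_apply,
      coe_snd', toProd, ofProd, mul_a, mul_b, mul_c, cauchyExt_a, cauchyExt_b, cauchyExt_c] <;> ring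

end A3

theorem stmt19_general (E₃ : Submodule ℝ A3)
    (Ω : Set A3)
    (D : Set ℂ) (hD : IsOpen D)
    (F₀ F₁ F₂ : ℂ → ℂ) (hF₀ : DifferentiableOn ℂ F₀ D)
    (hF₁ : DifferentiableOn ℂ F₁ D) (hF₂ : DifferentiableOn ℂ F₂ D)
    (Φ : A3 → A3)
    (hrep : ∀ ζ ∈ Ω, ∃ r > (0 : ℝ), Metric.closedBall (A3.fl ζ) r ⊆ D ∧
      Φ ζ = (2 * Real.pi * Complex.I : ℂ)⁻¹ •
        A3.cInt (fun ξ => A3.el (F₀ ξ) (F₁ ξ) (F₂ ξ) * Ring.inverse (A3.toA3 ξ - ζ))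
          (A3.fl ζ) r) :
    ∃ Ψ Ψ' : A3 → A3,
      (∀ ζ ∈ Ω, Ψ ζ = Φ ζ) ∧
      (∀ ζ : A3, ζ ∈ E₃ → A3.fl ζ ∈ D → ∀ r > (0 : ℝ),
        Metric.closedBall (A3.fl ζ) r ⊆ D →
        Ψ' ζ = (2 * Real.pi * Complex.I : ℂ)⁻¹ •
          A3.cInt (fun ξ =>
              A3.el (deriv F₀ ξ) (deriv F₁ ξ) (deriv F₂ ξ) *
                Ring.inverse (A3.toA3 ξ - ζ)) (A3.fl ζ) r) ∧
      (∀ ζ : A3, ζ ∈ E₃ → A3.fl ζ ∈ D → ∀ ε > (0 : ℝ), ∃ δ > (0 : ℝ),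
        ∀ h : A3, h ∈ E₃ → A3.nrm h < δ →
          A3.nrm (Ψ (ζ + h) - Ψ ζ - h * Ψ' ζ) ≤ ε * A3.nrm h) := by
  have hderiv {F : ℂ → ℂ} (hF : DifferentiableOn ℂ F D) : DifferentiableOn ℂ (deriv F) D :=
    (hF.analyticOnNhd hD).deriv.differentiableOn
  refine ⟨A3.cauchyExt F₀ F₁ F₂, A3.cauchyExt (deriv F₀) (deriv F₁) (deriv F₂), ?_, ?_, ?_⟩
  · intro ζ hζ
    obtain ⟨r, hr, hball, hΦ⟩ := hrep ζ hζ
    rw [hΦ, A3.fl, A3.cauchyIntegral_eq_cauchyExt ζ hr (hF₀.mono hball) (hF₁.mono hball)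
      (hF₂.mono hball)]
  · intro ζ _ _ r hr hball
    exact (A3.cauchyIntegral_eq_cauchyExt ζ hr ((hderiv hF₀).mono hball)
      ((hderiv hF₁).mono hball) ((hderiv hF₂).mono hball)).symm
  · intro ζ _ hζ ε hε
    have hnhds : D ∈ nhds ζ.a := hD.mem_nhds hζ
    obtain ⟨δ, hδ, H⟩ := A3.hasLorchDerivAt_cauchyExt (hF₀.analyticAt hnhds)
      (hF₁.analyticAt hnhds) (hF₂.analyticAt hnhds) ε hε
    exact ⟨δ, hδ, fun h _ => H h⟩

/-- a function on `Ω ⊆ E₃` with the Cauchy-type integral representation by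
holomorphic `F₀, F₁, F₂` on `D = f(Ω)` extends to the cylinder `Π = {ζ ∈ E₃ : f(ζ) ∈ D}`
to a Lorch differentiable function, whose Lorch derivative has the same representation
with the derivatives `F₀', F₁', F₂'`. -/
theorem stmt19 (E₃ : Submodule ℝ A3) (hsurj : ∀ w : ℂ, ∃ ζ ∈ E₃, A3.fl ζ = w)
    (Ω : Set A3) (hΩE : Ω ⊆ (E₃ : Set A3)) (hopen : IsOpen {x : E₃ | (x : A3) ∈ Ω})
    (D : Set ℂ) (hD : IsOpen D) (hDΩ : D = A3.fl '' Ω)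
    (F₀ F₁ F₂ : ℂ → ℂ) (hF₀ : DifferentiableOn ℂ F₀ D)
    (hF₁ : DifferentiableOn ℂ F₁ D) (hF₂ : DifferentiableOn ℂ F₂ D)
    (Φ : A3 → A3)
    (hrep : ∀ ζ ∈ Ω, ∃ r > (0 : ℝ), Metric.closedBall (A3.fl ζ) r ⊆ D ∧
      Φ ζ = (2 * Real.pi * Complex.I : ℂ)⁻¹ •
        A3.cInt (fun ξ => A3.el (F₀ ξ) (F₁ ξ) (F₂ ξ) * Ring.inverse (A3.toA3 ξ - ζ))
          (A3.fl ζ) r) :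
    ∃ Ψ Ψ' : A3 → A3,
      (∀ ζ ∈ Ω, Ψ ζ = Φ ζ) ∧
      (∀ ζ : A3, ζ ∈ E₃ → A3.fl ζ ∈ D → ∀ r > (0 : ℝ),
        Metric.closedBall (A3.fl ζ) r ⊆ D →
        Ψ' ζ = (2 * Real.pi * Complex.I : ℂ)⁻¹ •
          A3.cInt (fun ξ =>
              A3.el (deriv F₀ ξ) (deriv F₁ ξ) (deriv F₂ ξ) *
                Ring.inverse (A3.toA3 ξ - ζ)) (A3.fl ζ) r) ∧
      (∀ ζ : A3, ζ ∈ E₃ → A3.fl ζ ∈ D → ∀ ε > (0 : ℝ), ∃ δ > (0 : ℝ),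
        ∀ h : A3, h ∈ E₃ → A3.nrm h < δ →
          A3.nrm (Ψ (ζ + h) - Ψ ζ - h * Ψ' ζ) ≤ ε * A3.nrm h) :=
  stmt19_general E₃ Ω D hD F₀ F₁ F₂ hF₀ hF₁ hF₂ Φ hrep
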